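/- (Equation (3.6).) Under the stated hypotheses, for each α ∈ (0,1] the bounded continuous function a_t = ⟨g_α, P_t^{(α)} f_α⟩ satisfies the Volterra convolution equation ∫_0^t a_s ds = Φ_t(g_α, f_α) + iλ ∫_0^t Φ_{t−s}(g_α, g_α)·a_s ds for all t ≥ 0, where Φ_t(g, f) = ∫_0^t ⟨g, e_s·f⟩ ds. -/

import Mathlib

/-!
Write `a_s = ⟨g_α, P_s f_α⟩` and `φ(u) = ⟨g_α, e_u g_α⟩`. Pairing the Duhamel equation with `g_α`
and exchanging the `ω`- and `r`-integrals (legitimate because `|e_u| = 1`, so the integrand is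
dominated by `|g_α(ω)|² |a_r|`) gives the pointwise Volterra equation
`a_s = ⟨g_α, e_s f_α⟩ + iλ ∫_0^s φ(s - r) a_r dr`.
Integrating it over `[0, t]` and exchanging the order of integration on the triangle
`0 ≤ r ≤ s ≤ t` yields (3.6), because `∫_r^t φ(s - r) ds = Φ_{t-r}(g_α, g_α)`.
-/

open MeasureTheory Complex Filter Set
open scoped ComplexConjugate

theorem MeasureTheory.MemLp.comp_mul_left {E : Type*} [NormedAddCommGroup E] {p : ENNReal}
    {u : ℝ → E} (hu : MemLp u p volume) {α : ℝ} (hα : α ≠ 0) :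
    MemLp (fun x => u (α * x)) p volume := by
  have h : MemLp u p (Measure.map (α * ·) volume) := by
    rw [Real.map_volume_mul_left hα]
    exact hu.smul_measure ENNReal.ofReal_ne_top
  exact h.comp_of_map (measurable_const_mul α).aemeasurable

theorem Complex.norm_exp_I_mul_ofReal_mul_ofReal (x y : ℝ) : ‖exp (I * x * y)‖ = 1 := by
  rw [mul_assoc, ← ofReal_mul, norm_exp_I_mul_ofReal]

section

variable {X : Type*} [MeasurableSpace X] {μ : Measure X}

theorem integral_conj_mul_eq_inner {u : X → ℂ} (hu : MemLp u 2 μ) (v : Lp ℂ 2 μ) :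
    ∫ x, conj (u x) * v x ∂μ = inner ℂ (hu.toLp u) v := by
  rw [L2.inner_def]
  refine integral_congr_ae ?_
  filter_upwards [hu.coeFn_toLp] with x hx
  rw [RCLike.inner_apply, hx, mul_comm]

theorem integrable_conj_mul {u w : X → ℂ} (hu : MemLp u 2 μ) (hw : MemLp w 2 μ) :
    Integrable (fun x => conj (u x) * w x) μ := by
  refine (L2.integrable_inner (𝕜 := ℂ) (hu.toLp u) (hw.toLp w)).congr ?_
  filter_upwards [hu.coeFn_toLp, hw.coeFn_toLp] with x hu' hw'
  rw [RCLike.inner_apply, hu', hw', mul_comm]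

end

section

variable {μ : Measure ℝ}

theorem MeasureTheory.MemLp.exp_I_mul_ofReal_mul {w : ℝ → ℂ} {p : ENNReal} (hw : MemLp w p μ)
    (s : ℝ) :
    MemLp (fun x : ℝ => exp (I * x * s) * w x) p μ :=
  hw.of_le (.mul (by fun_prop) hw.1) <| .of_forall fun x => by
    rw [norm_mul, norm_exp_I_mul_ofReal_mul_ofReal, one_mul]

theorem continuous_integral_conj_mul_exp_I_mul {u w : ℝ → ℂ} (hu : MemLp u 2 μ)
    (hw : MemLp w 2 μ) :
    Continuous fun s : ℝ => ∫ x, conj (u x) * (exp (I * x * s) * w x) ∂μ := by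
  refine continuous_of_dominated
    (fun s => (integrable_conj_mul hu (hw.exp_I_mul_ofReal_mul s)).1)
    (fun s => .of_forall fun x => ?_) (integrable_conj_mul hu hw).norm
    (.of_forall fun x => by fun_prop)
  rw [norm_mul, norm_mul, norm_mul, norm_exp_I_mul_ofReal_mul_ofReal, one_mul]

theorem integrable_uncurry_mul_exp_I_mul_mul [SFinite μ] {h a : ℝ → ℂ} {s : ℝ}
    (hh : Integrable h μ) (ha : IntegrableOn a (Ioc 0 s)) :
    Integrable (Function.uncurry fun x r : ℝ => h x * (exp (I * x * (s - r)) * a r))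
      (μ.prod (volume.restrict (Ioc 0 s))) := by
  refine (hh.norm.mul_prod ha.norm).mono' ?_ (.of_forall fun q => ?_)
  · exact hh.1.comp_fst.mul (.mul (by fun_prop) ha.1.comp_snd)
  · simp only [Function.uncurry, norm_mul, ← ofReal_sub, norm_exp_I_mul_ofReal_mul_ofReal,
      one_mul, le_refl]

theorem integral_conj_mul_of_ae_eq_duhamel [SFinite μ] {u w a p : ℝ → ℂ} (c : ℂ) {s : ℝ}
    (hs : 0 ≤ s) (hu : MemLp u 2 μ) (hw : MemLp w 2 μ) (ha : IntegrableOn a (Ioc 0 s))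
    (hp : p =ᵐ[μ] fun ω =>
      exp (I * ω * s) * w ω + c * ∫ r in (0:ℝ)..s, exp (I * ω * (s - r)) * u ω * a r) :
    ∫ x, conj (u x) * p x ∂μ =
      (∫ x, conj (u x) * (exp (I * x * s) * w x) ∂μ) +
        c * ∫ r in (0:ℝ)..s, (∫ x, conj (u x) * (exp (I * x * (s - r : ℝ)) * u x) ∂μ) * a r := by
  set F := fun x r : ℝ => conj (u x) * u x * (exp (I * x * (s - r)) * a r)
  have hF : Integrable (Function.uncurry F) (μ.prod (volume.restrict (Ioc 0 s))) :=
    integrable_uncurry_mul_exp_I_mul_mul (integrable_conj_mul hu hu) ha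
  have hFx : Integrable (fun x => c * ∫ r in Ioc 0 s, F x r) μ :=
    hF.integral_prod_left.const_mul c
  have hpF : ∀ᵐ x ∂μ, conj (u x) * p x =
      conj (u x) * (exp (I * x * s) * w x) + c * ∫ r in Ioc 0 s, F x r := by
    filter_upwards [hp] with x hx
    have : conj (u x) * ∫ r in Ioc 0 s, exp (I * x * (s - r)) * u x * a r =
        ∫ r in Ioc 0 s, F x r := by
      rw [← integral_const_mul]
      congr 1 with r
      ring
    rw [hx, intervalIntegral.integral_of_le hs, ← this]
    ring
  rw [integral_congr_ae hpF, integral_add (integrable_conj_mul hu (hw.exp_I_mul_ofReal_mul s))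
    hFx, integral_const_mul, integral_integral_swap hF,
    intervalIntegral.integral_of_le hs]
  congr 2
  refine integral_congr_ae (.of_forall fun r => ?_)
  dsimp only
  rw [← integral_mul_const]
  congr 1 with x
  push_cast
  ring

end

theorem intervalIntegral_integral_comp_sub_mul {φ a : ℝ → ℂ} {t : ℝ} (ht : 0 ≤ t)
    (hφ : Continuous φ) (ha : IntegrableOn a (Ioc 0 t)) :
    ∫ s in (0:ℝ)..t, ∫ r in (0:ℝ)..s, φ (s - r) * a r =
      ∫ s in (0:ℝ)..t, (∫ r in (0:ℝ)..(t - s), φ r) * a s := by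
  set K : ℝ × ℝ → ℂ := {q | q.2 ≤ q.1}.indicator fun q => φ (q.1 - q.2) * a q.2
  have hK : Integrable K ((volume.restrict (Ioc 0 t)).prod (volume.restrict (Ioc 0 t))) := by
    obtain ⟨M, hM⟩ :=
      isCompact_Icc.exists_bound_of_continuousOn (hφ.continuousOn (s := Icc (-t) t))
    refine ((integrable_const M).mul_prod ha.norm).mono' ?_ ?_
    · exact ((hφ.comp (continuous_fst.sub continuous_snd)).aestronglyMeasurable.mul
        ha.1.comp_snd).indicator (measurableSet_le measurable_snd measurable_fst)
    · rw [Measure.prod_restrict]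
      filter_upwards [ae_restrict_mem (measurableSet_Ioc.prod measurableSet_Ioc)]
        with q ⟨⟨hq₁, hq₁t⟩, ⟨hq₂, hq₂t⟩⟩
      refine (norm_indicator_le_norm_self _ _).trans ?_
      rw [norm_mul]
      exact mul_le_mul_of_nonneg_right (hM _ ⟨by linarith, by linarith⟩) (norm_nonneg _)
  have hinner : ∀ s ∈ Ioc 0 t,
      ∫ r in (0:ℝ)..s, φ (s - r) * a r = ∫ r in Ioc 0 t, K (s, r) := by
    intro s hs
    have : ∀ r, K (s, r) = (Iic s).indicator (fun r => φ (s - r) * a r) r := fun r => rfl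
    simp only [this]
    rw [intervalIntegral.integral_of_le hs.1.le, setIntegral_indicator measurableSet_Iic,
      Ioc_inter_Iic, min_eq_right hs.2]
  have houter : ∀ r ∈ Ioc 0 t,
      ∫ s in Ioc 0 t, K (s, r) = (∫ u in (0:ℝ)..(t - r), φ u) * a r := by
    intro r hr
    have : ∀ s, K (s, r) = (Ici r).indicator (fun s => φ (s - r) * a r) s := fun s => rfl
    have hIoc : Ioc 0 t ∩ Ici r = Icc r t := by
      ext s
      simp only [mem_inter_iff, mem_Ioc, mem_Ici, mem_Icc]
      exact ⟨fun h => ⟨h.2, h.1.2⟩, fun h => ⟨⟨hr.1.trans_le h.1, h.2⟩, h.1⟩⟩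
    simp only [this]
    rw [setIntegral_indicator measurableSet_Ici, hIoc, integral_Icc_eq_integral_Ioc,
      ← intervalIntegral.integral_of_le hr.2, intervalIntegral.integral_mul_const,
      intervalIntegral.integral_comp_sub_right (fun u => φ u) r, sub_self]
  calc ∫ s in (0:ℝ)..t, ∫ r in (0:ℝ)..s, φ (s - r) * a r
      = ∫ s in Ioc 0 t, ∫ r in Ioc 0 t, K (s, r) := by
        rw [intervalIntegral.integral_of_le ht]
        exact setIntegral_congr_fun measurableSet_Ioc hinner
    _ = ∫ r in Ioc 0 t, ∫ s in Ioc 0 t, K (s, r) :=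
        integral_integral_swap (f := fun s r => K (s, r)) hK
    _ = ∫ s in (0:ℝ)..t, (∫ r in (0:ℝ)..(t - s), φ r) * a s := by
        rw [intervalIntegral.integral_of_le ht]
        exact setIntegral_congr_fun measurableSet_Ioc houter

theorem intervalIntegral_eq_of_volterra {a b φ : ℝ → ℂ} (c : ℂ) {t : ℝ} (ht : 0 ≤ t)
    (ha : IntervalIntegrable a volume 0 t) (hb : IntervalIntegrable b volume 0 t)
    (hφ : Continuous φ)
    (h : ∀ s ∈ Icc 0 t, a s = b s + c * ∫ r in (0:ℝ)..s, φ (s - r) * a r) :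
    ∫ s in (0:ℝ)..t, a s =
      (∫ s in (0:ℝ)..t, b s) + c * ∫ s in (0:ℝ)..t, (∫ r in (0:ℝ)..(t - s), φ r) * a s := by
  have hab : ∫ s in (0:ℝ)..t, (a s - b s) =
      c * ∫ s in (0:ℝ)..t, ∫ r in (0:ℝ)..s, φ (s - r) * a r := by
    rw [← intervalIntegral.integral_const_mul]
    refine intervalIntegral.integral_congr fun s hs => ?_
    rw [h s (uIcc_of_le ht ▸ hs)]
    ring
  rw [← intervalIntegral_integral_comp_sub_mul ht hφ
    ((intervalIntegrable_iff_integrableOn_Ioc_of_le ht).1 ha), ← hab,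
    intervalIntegral.integral_sub ha hb]
  ring

theorem duhamel_volterra_equation_general (lam : ℝ) (f g : ℝ → ℂ)
    (hg2 : MemLp g 2 (volume : Measure ℝ))
    (P : ℝ → ℝ → (Lp ℂ 2 (volume : Measure ℝ) ≃ₗᵢ[ℂ] Lp ℂ 2 (volume : Measure ℝ)))
    (hPcont : ∀ α ∈ Set.Ioc (0:ℝ) 1, ∀ v : Lp ℂ 2 (volume : Measure ℝ),
      ContinuousOn (fun t : ℝ => P α t v) (Set.Ici 0))
    (hDuh : ∀ α ∈ Set.Ioc (0:ℝ) 1, ∀ v : Lp ℂ 2 (volume : Measure ℝ), ∀ t : ℝ, 0 ≤ t →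
      (P α t v : ℝ → ℂ) =ᵐ[volume] fun ω =>
        Complex.exp (Complex.I * ω * t) * (v : ℝ → ℂ) ω +
          Complex.I * lam * ∫ s in (0:ℝ)..t,
            Complex.exp (Complex.I * ω * (t - s)) * g (α * ω) *
              ∫ x : ℝ, (starRingEnd ℂ) (g (α * x)) * (P α s v : ℝ → ℂ) x)
    (fLp : ℝ → Lp ℂ 2 (volume : Measure ℝ))
    (hfLp : ∀ α ∈ Set.Ioc (0:ℝ) 1, (fLp α : ℝ → ℂ) =ᵐ[volume] fun ω => f (α * ω)) :
    ∀ α ∈ Set.Ioc (0:ℝ) 1, ∀ t : ℝ, 0 ≤ t →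
      (∫ s in (0:ℝ)..t, ∫ x : ℝ,
          (starRingEnd ℂ) (g (α * x)) * (P α s (fLp α) : ℝ → ℂ) x) =
        (∫ s in (0:ℝ)..t, ∫ x : ℝ,
            (starRingEnd ℂ) (g (α * x)) * (Complex.exp (Complex.I * x * s) * f (α * x))) +
          Complex.I * lam * ∫ s in (0:ℝ)..t,
            (∫ r in (0:ℝ)..(t - s), ∫ x : ℝ,
              (starRingEnd ℂ) (g (α * x)) * (Complex.exp (Complex.I * x * r) * g (α * x))) *
              ∫ x : ℝ, (starRingEnd ℂ) (g (α * x)) * (P α s (fLp α) : ℝ → ℂ) x := by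
  intro α hα t ht
  have hG : MemLp (fun x => g (α * x)) 2 volume := hg2.comp_mul_left hα.1.ne'
  have hF : MemLp (fun x => f (α * x)) 2 volume := (Lp.memLp (fLp α)).ae_eq (hfLp α hα)
  have ha : ContinuousOn (fun s => ∫ x, conj (g (α * x)) * P α s (fLp α) x) (Ici 0) := by
    simp only [integral_conj_mul_eq_inner hG]
    exact continuousOn_const.inner (hPcont α hα (fLp α))
  refine intervalIntegral_eq_of_volterra _ ht
    ((ha.mono fun s hs => hs.1).intervalIntegrable_of_Icc ht)
    ((continuous_integral_conj_mul_exp_I_mul hG hF).intervalIntegrable 0 t)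
    (continuous_integral_conj_mul_exp_I_mul hG hG) fun s hs => ?_
  refine integral_conj_mul_of_ae_eq_duhamel _ hs.1 hG hF
    ((ha.mono fun r hr => hr.1).integrableOn_Icc.mono_set Ioc_subset_Icc_self) ?_
  filter_upwards [hDuh α hα (fLp α) s hs.1, hfLp α hα] with x hPx hfx
  rw [hPx, hfx]

/-- Equation (3.6): for each `α ∈ (0,1]` the function `a_t = ⟨g_α, P_t^{(α)} f_α⟩`
satisfies the Volterra convolution equation
`∫_0^t a_s ds = Φ_t(g_α,f_α) + iλ ∫_0^t Φ_{t-s}(g_α,g_α) a_s ds`,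
where `Φ_t(g,f) = ∫_0^t ⟨g, e_s f⟩ ds`. -/
theorem duhamel_volterra_equation (lam : ℝ) (f g : ℝ → ℂ)
    (hf2 : MemLp f 2 (volume : Measure ℝ)) (hg2 : MemLp g 2 (volume : Measure ℝ))
    (P : ℝ → ℝ → (Lp ℂ 2 (volume : Measure ℝ) ≃ₗᵢ[ℂ] Lp ℂ 2 (volume : Measure ℝ)))
    (hP0 : ∀ α ∈ Set.Ioc (0:ℝ) 1, ∀ v : Lp ℂ 2 (volume : Measure ℝ), P α 0 v = v)
    (hPcont : ∀ α ∈ Set.Ioc (0:ℝ) 1, ∀ v : Lp ℂ 2 (volume : Measure ℝ),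
      ContinuousOn (fun t : ℝ => P α t v) (Set.Ici 0))
    (hDuh : ∀ α ∈ Set.Ioc (0:ℝ) 1, ∀ v : Lp ℂ 2 (volume : Measure ℝ), ∀ t : ℝ, 0 ≤ t →
      (P α t v : ℝ → ℂ) =ᵐ[volume] fun ω =>
        Complex.exp (Complex.I * ω * t) * (v : ℝ → ℂ) ω +
          Complex.I * lam * ∫ s in (0:ℝ)..t,
            Complex.exp (Complex.I * ω * (t - s)) * g (α * ω) *
              ∫ x : ℝ, (starRingEnd ℂ) (g (α * x)) * (P α s v : ℝ → ℂ) x)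
    (fLp : ℝ → Lp ℂ 2 (volume : Measure ℝ))
    (hfLp : ∀ α ∈ Set.Ioc (0:ℝ) 1, (fLp α : ℝ → ℂ) =ᵐ[volume] fun ω => f (α * ω)) :
    ∀ α ∈ Set.Ioc (0:ℝ) 1, ∀ t : ℝ, 0 ≤ t →
      (∫ s in (0:ℝ)..t, ∫ x : ℝ,
          (starRingEnd ℂ) (g (α * x)) * (P α s (fLp α) : ℝ → ℂ) x) =
        (∫ s in (0:ℝ)..t, ∫ x : ℝ,
            (starRingEnd ℂ) (g (α * x)) * (Complex.exp (Complex.I * x * s) * f (α * x))) +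
          Complex.I * lam * ∫ s in (0:ℝ)..t,
            (∫ r in (0:ℝ)..(t - s), ∫ x : ℝ,
              (starRingEnd ℂ) (g (α * x)) * (Complex.exp (Complex.I * x * r) * g (α * x))) *
              ∫ x : ℝ, (starRingEnd ℂ) (g (α * x)) * (P α s (fLp α) : ℝ → ℂ) x :=
  duhamel_volterra_equation_general lam f g hg2 P hPcont hDuh fLp hfLp
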